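/- arXiv:1204.6651 — 8 statements merged into one kernel-verified Lean document; each statement's English description precedes it below -/
import Mathlib

section
/- Let r ≥ 1 and let a = (a_1, …, a_r) ∈ ℤ^r satisfy q(a) = 1, where q is the integral quadratic form corresponding to the Dynkin diagram A_r. Then there exist a sign ε ∈ {1, −1} and indices 1 ≤ j ≤ k ≤ r such that a_i = ε for all j ≤ i ≤ k and a_i = 0 for all other i. In other words, up to sign a is the indicator vector of a nonempty interval of consecutive indices. -/
/-!
Extend `a` by zero to the positions `0` and `r + 1`. Then `2 q(a)` is the sum of the squares of
the `r + 1` increments `a i - a (i + 1)`, so `q(a) = 1` forces exactly two nonzero increments,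
each `±1`. The increments telescope to `0`, so these two are opposite, and `a` equals `ε` between
them and `0` elsewhere.
-/

open Finset

def dynkinAQuadForm (r : ℕ) (a : ℕ → ℤ) : ℤ :=
  ∑ i ∈ Icc 1 r, a i ^ 2 - ∑ i ∈ Icc 1 (r - 1), a i * a (i + 1)

theorem sum_Icc_one_eq_sum_range {M : Type*} [AddCommMonoid M] (f : ℕ → M) (n : ℕ) :
    ∑ i ∈ Icc 1 n, f i = ∑ i ∈ range n, f (i + 1) := by
  induction n with
  | zero => simp
  | succ n ih => rw [sum_Icc_succ_top (by omega), ih, sum_range_succ]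

theorem dynkinAQuadForm_congr {r : ℕ} {a b : ℕ → ℤ} (h : ∀ i ∈ Icc 1 r, a i = b i) :
    dynkinAQuadForm r a = dynkinAQuadForm r b := by
  unfold dynkinAQuadForm
  congr 1
  · exact sum_congr rfl fun i hi => by rw [h i hi]
  · refine sum_congr rfl fun i hi => ?_
    rw [mem_Icc] at hi
    rw [h i (mem_Icc.2 ⟨hi.1, by omega⟩), h (i + 1) (mem_Icc.2 ⟨by omega, by omega⟩)]

theorem two_mul_dynkinAQuadForm {n : ℕ} {b : ℕ → ℤ} (h0 : b 0 = 0) (hn : b (n + 2) = 0) :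
    2 * dynkinAQuadForm (n + 1) b = ∑ i ∈ range (n + 2), (b i - b (i + 1)) ^ 2 := by
  have hsq : ∑ i ∈ range (n + 2), (b i - b (i + 1)) ^ 2 = ∑ i ∈ range (n + 2), b i ^ 2
      + ∑ i ∈ range (n + 2), b (i + 1) ^ 2 - 2 * ∑ i ∈ range (n + 2), b i * b (i + 1) := by
    rw [mul_sum, ← sum_add_distrib, ← sum_sub_distrib]
    exact sum_congr rfl fun i _ => by ring
  rw [hsq, sum_range_succ' (fun i => b i ^ 2), sum_range_succ (fun i => b (i + 1) ^ 2) (n + 1),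
    sum_range_succ' (fun i => b i * b (i + 1)),
    sum_range_succ (fun i => b (i + 1) * b (i + 1 + 1)) n, dynkinAQuadForm, Nat.add_sub_cancel, sum_Icc_one_eq_sum_range, sum_Icc_one_eq_sum_range, h0, hn]
  ring

theorem eq_one_or_eq_neg_one_of_sq_le_two {x : ℤ} (hx : x ≠ 0) (h : x ^ 2 ≤ 2) :
    x = 1 ∨ x = -1 := by
  have : -1 ≤ x ∧ x ≤ 1 := ⟨by nlinarith, by nlinarith⟩
  omega

theorem exists_eq_ite_sub_ite_of_sum_eq_zero_of_sum_sq_eq_two {d : ℕ → ℤ} {m : ℕ}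
    (hsum : ∑ i ∈ range m, d i = 0) (hsq : ∑ i ∈ range m, d i ^ 2 = 2) :
    ∃ ε : ℤ, (ε = 1 ∨ ε = -1) ∧ ∃ p q, p < q ∧ q < m ∧
      ∀ i < m, d i = (if i = q then ε else 0) - (if i = p then ε else 0) := by
  set S := (range m).filter (d · ≠ 0) with hS
  have hunit : ∀ i ∈ S, d i = 1 ∨ d i = -1 := fun i hi => by
    rw [mem_filter] at hi
    exact eq_one_or_eq_neg_one_of_sq_le_two hi.2
      (hsq ▸ single_le_sum (fun j _ => sq_nonneg (d j)) hi.1)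
  have hcard : #S = 2 := by
    have : ∑ i ∈ S, d i ^ 2 = 2 :=
      (sum_filter_of_ne fun i _ hi => by simpa using hi).trans hsq
    rw [sum_congr rfl fun i hi => (by rcases hunit i hi with h | h <;> simp [h] : d i ^ 2 = 1),
      sum_const, nsmul_one] at this
    exact_mod_cast this
  obtain ⟨p, q, hpq, hSpq⟩ : ∃ p q, p < q ∧ S = {p, q} := by
    obtain ⟨x, y, hxy, hS⟩ := card_eq_two.1 hcard
    rcases hxy.lt_or_gt with h | h
    · exact ⟨x, y, h, hS⟩
    · exact ⟨y, x, h, hS.trans (pair_comm x y)⟩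
  have hqS : q ∈ S := by simp [hSpq]
  have hpq_sum : d p + d q = 0 := by
    rw [← sum_pair hpq.ne, ← hSpq, hS, sum_filter_ne_zero, hsum]
  refine ⟨d q, hunit q hqS, p, q, hpq, mem_range.1 (mem_filter.1 hqS).1, fun i hi => ?_⟩
  by_cases hiS : i ∈ S
  · rw [hSpq, mem_insert, mem_singleton] at hiS
    rcases hiS with rfl | rfl
    · simp only [hpq.ne, ↓reduceIte, zero_sub]
      omega
    · simp [hpq.ne']
  · have hip : i ≠ p := by rintro rfl; simp [hSpq] at hiS
    have hiq : i ≠ q := by rintro rfl; simp [hSpq] at hiS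
    simp only [hS, mem_filter, mem_range, not_and, not_not] at hiS
    simp [hip, hiq, hiS hi]

theorem exists_eq_ite_of_sum_sq_sub_eq_two {b : ℕ → ℤ} {m : ℕ} (h0 : b 0 = 0) (hm : b m = 0)
    (h : ∑ i ∈ range m, (b i - b (i + 1)) ^ 2 = 2) :
    ∃ ε : ℤ, (ε = 1 ∨ ε = -1) ∧ ∃ p q, p < q ∧ q < m ∧
      ∀ i ≤ m, b i = if p < i ∧ i ≤ q then ε else 0 := by
  have htel : ∀ n, ∑ i ∈ range n, (b i - b (i + 1)) = b 0 - b n := sum_range_sub' b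
  obtain ⟨ε, hε, p, q, hpq, hqm, hd⟩ :=
    exists_eq_ite_sub_ite_of_sum_eq_zero_of_sum_sq_eq_two (by rw [htel, h0, hm, sub_zero]) h
  refine ⟨ε, hε, p, q, hpq, hqm, fun i hi => ?_⟩
  have hsum := htel i
  rw [sum_congr rfl fun j hj => hd j (by rw [mem_range] at hj; omega), sum_sub_distrib,
    sum_ite_eq', sum_ite_eq', h0] at hsum
  simp only [mem_range] at hsum
  split_ifs at hsum ⊢ <;> omega

/-- If `q(a) = 1` for the quadratic form `q` of Dynkin type `A_r`
(with `a` indexed `1, …, r`), then up to sign `a` is the indicator vector of a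
nonempty interval of consecutive indices. -/
theorem stmt_0 (r : ℕ) (hr : 1 ≤ r) (a : ℕ → ℤ)
    (hq : (∑ i ∈ Finset.Icc 1 r, (a i) ^ 2)
        - (∑ i ∈ Finset.Icc 1 (r - 1), a i * a (i + 1)) = 1) :
    ∃ ε : ℤ, (ε = 1 ∨ ε = -1) ∧ ∃ j k : ℕ, 1 ≤ j ∧ j ≤ k ∧ k ≤ r ∧
      ∀ i : ℕ, 1 ≤ i → i ≤ r → a i = if j ≤ i ∧ i ≤ k then ε else 0 := by
  obtain ⟨n, rfl⟩ : ∃ n, r = n + 1 := ⟨r - 1, by omega⟩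
  set b : ℕ → ℤ := fun i => if i ∈ Icc 1 (n + 1) then a i else 0
  have hab : ∀ i ∈ Icc 1 (n + 1), a i = b i := fun i hi => (if_pos hi).symm
  have hb : ∑ i ∈ range (n + 2), (b i - b (i + 1)) ^ 2 = 2 := by
    rw [← two_mul_dynkinAQuadForm (by simp [b]) (by simp [b]), ← dynkinAQuadForm_congr hab,
      dynkinAQuadForm, hq, mul_one]
  obtain ⟨ε, hε, p, q, hpq, hqn, hbpq⟩ := exists_eq_ite_of_sum_sq_sub_eq_two (by simp [b])
    (by simp [b]) hb
  refine ⟨ε, hε, p + 1, q, by omega, by omega, by omega, fun i hi1 hin => ?_⟩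
  rw [hab i (mem_Icc.2 ⟨hi1, hin⟩), hbpq i (by omega)]
  simp only [Nat.add_one_le_iff]
end

section
/- Let r ≥ 1 and let a = (a_1, …, a_r) ∈ ℤ^r satisfy q(a) = 2, where q is the integral quadratic form corresponding to the Dynkin diagram A_r. Then there exists a sign ε ∈ {1, −1} such that one of the following holds: (i) there exist indices 1 ≤ i_1 ≤ j_1 and i_2 ≤ j_2 ≤ r with j_1 + 2 ≤ i_2 (so the two blocks are separated by at least one zero) and a sign δ ∈ {1, −1} such that a_t = ε for i_1 ≤ t ≤ j_1, a_t = εδ for i_2 ≤ t ≤ j_2, and a_t = 0 for all other t; or (ii) there exist indices 1 ≤ i_1 < i_2 ≤ j_1 < j_2 ≤ r such that a_t = 2ε for i_2 ≤ t ≤ j_1, a_t = ε for i_1 ≤ t < i_2 and for j_1 < t ≤ j_2, and a_t = 0 for all other t. -/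
/-!
Pad `a` by `a₀ = a_{r+1} = 0`. Then `2 q(a) = ∑_{i=0}^{r} (a_{i+1} - a_i)²` and the jumps
`a_{i+1} - a_i` telescope to `0`. So `q(a) = 2` leaves only two possibilities: one jump `±2`,
which cannot sum to zero, or exactly four jumps `±1`, two of each sign. The padded `a` is the
step function with these jumps; the jump signs `(ε, ε, -ε, -ε)` give the block `2ε` flanked by
`ε`'s, and `(ε, -ε, δε, -δε)` give two separated blocks.
-/

open Finset

theorem Finset.exists_lt_lt_lt_eq_of_card_eq_four {α : Type*} [LinearOrder α] {s : Finset α}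
    (h : s.card = 4) : ∃ a b c d, a < b ∧ b < c ∧ c < d ∧ s = {a, b, c, d} := by
  set f := s.orderEmbOfFin h
  refine ⟨f 0, f 1, f 2, f 3, by simp, by simp, by simp, ?_⟩
  ext x
  rw [← mem_coe, ← s.range_orderEmbOfFin h]
  simp only [Set.mem_range, Fin.exists_fin_succ, Fin.exists_fin_zero, mem_insert, mem_singleton]
  simp [eq_comm, f]

theorem eq_one_or_neg_one_of_sum_eq_zero_of_sum_sq_eq_four {ι : Type*} [DecidableEq ι]
    {s : Finset ι} {d : ι → ℤ} (hsum : ∑ i ∈ s, d i = 0) (hsq : ∑ i ∈ s, d i ^ 2 = 4)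
    {i : ι} (hi : i ∈ s) (hdi : d i ≠ 0) : d i = 1 ∨ d i = -1 := by
  have hrest := add_sum_erase s (fun j => d j ^ 2) hi
  have hrest_nonneg : 0 ≤ ∑ j ∈ s.erase i, d j ^ 2 := sum_nonneg fun j _ => sq_nonneg (d j)
  suffices d i ^ 2 ≠ 4 by
    have : d i ^ 2 < 4 := by omega
    have : -2 < d i ∧ d i < 2 := ⟨by nlinarith, by nlinarith⟩
    omega
  intro h4
  -- `d i = ±2` exhausts the sum of squares, so then `∑ i ∈ s, d i = d i ≠ 0`.
  have hzero : ∀ j ∈ s.erase i, d j = 0 := by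
    have := (sum_eq_zero_iff_of_nonneg (s := s.erase i) fun j _ => sq_nonneg (d j)).mp
      (by omega)
    exact fun j hj => pow_eq_zero_iff two_ne_zero |>.mp (this j hj)
  rw [← add_sum_erase s d hi, sum_eq_zero hzero, add_zero] at hsum
  exact hdi hsum

theorem exists_four_unit_jumps {ι : Type*} [LinearOrder ι] {s : Finset ι} {d : ι → ℤ}
    (hsum : ∑ i ∈ s, d i = 0) (hsq : ∑ i ∈ s, d i ^ 2 = 4) :
    ∃ k₁ k₂ k₃ k₄, k₁ < k₂ ∧ k₂ < k₃ ∧ k₃ < k₄ ∧ {i ∈ s | d i ≠ 0} = {k₁, k₂, k₃, k₄} ∧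
      (d k₁ = 1 ∨ d k₁ = -1) ∧ (d k₂ = 1 ∨ d k₂ = -1) ∧ (d k₃ = 1 ∨ d k₃ = -1) ∧
      (d k₄ = 1 ∨ d k₄ = -1) ∧ d k₁ + d k₂ + d k₃ + d k₄ = 0 := by
  set T := {i ∈ s | d i ≠ 0}
  have hunit : ∀ i ∈ T, d i = 1 ∨ d i = -1 := fun i hi =>
    eq_one_or_neg_one_of_sum_eq_zero_of_sum_sq_eq_four hsum hsq (mem_filter.mp hi).1
      (mem_filter.mp hi).2
  have hsumT : ∑ i ∈ T, d i = 0 := by rwa [sum_filter_ne_zero]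
  have hcard : T.card = 4 := by
    have hsqT : ∑ i ∈ T, d i ^ 2 = 4 := by
      rw [← hsq]; exact sum_filter_of_ne fun i _ h => by simpa using h
    have hsq_one : ∀ i ∈ T, d i ^ 2 = 1 := fun i hi => by
      rcases hunit i hi with h | h <;> simp [h]
    rw [sum_congr rfl hsq_one, sum_const, nsmul_eq_mul, mul_one] at hsqT
    exact_mod_cast hsqT
  obtain ⟨k₁, k₂, k₃, k₄, h₁₂, h₂₃, h₃₄, hT⟩ := exists_lt_lt_lt_eq_of_card_eq_four hcard
  refine ⟨k₁, k₂, k₃, k₄, h₁₂, h₂₃, h₃₄, hT, hunit _ (by simp [hT]), hunit _ (by simp [hT]),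
    hunit _ (by simp [hT]), hunit _ (by simp [hT]), ?_⟩
  rw [hT, sum_insert (by simp [h₁₂.ne, (h₁₂.trans h₂₃).ne, (h₁₂.trans (h₂₃.trans h₃₄)).ne]),
    sum_insert (by simp [h₂₃.ne, (h₂₃.trans h₃₄).ne]), sum_pair h₃₄.ne] at hsumT
  linarith

theorem eq_sum_filter_lt_of_sub_eq_zero {f : ℕ → ℤ} (h0 : f 0 = 0) {T : Finset ℕ}
    (hT : ∀ i ∉ T, f (i + 1) - f i = 0) (k : ℕ) :
    f k = ∑ j ∈ T with j < k, (f (j + 1) - f j) := by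
  calc f k = ∑ i ∈ range k, (f (i + 1) - f i) := by rw [sum_range_sub, h0, sub_zero]
    _ = _ := by
      refine (sum_subset (fun j hj => ?_) fun i hi hiT => hT i fun hiT' => hiT ?_).symm
      · simp only [mem_filter, mem_range] at hj ⊢; exact hj.2
      · simp only [mem_filter, mem_range] at hi ⊢; exact ⟨hiT', hi⟩

def quadFormA (r : ℕ) (a : ℕ → ℤ) : ℤ :=
  ∑ i ∈ Icc 1 r, a i ^ 2 - ∑ i ∈ Icc 1 (r - 1), a i * a (i + 1)

def restrictIcc (r : ℕ) (a : ℕ → ℤ) (i : ℕ) : ℤ := if i ∈ Icc 1 r then a i else 0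

section restrictIcc

variable (r : ℕ) (a : ℕ → ℤ)

theorem restrictIcc_zero : restrictIcc r a 0 = 0 := by simp [restrictIcc]

theorem restrictIcc_of_lt {i : ℕ} (h : r < i) : restrictIcc r a i = 0 := by
  simp only [restrictIcc, mem_Icc, ite_eq_right_iff]; omega

theorem restrictIcc_of_mem {i : ℕ} (h : i ∈ Icc 1 r) : restrictIcc r a i = a i := if_pos h

theorem sum_range_restrictIcc_sq :
    ∑ i ∈ range (r + 1), restrictIcc r a i ^ 2 = ∑ i ∈ Icc 1 r, a i ^ 2 := by
  have hsq (i : ℕ) : restrictIcc r a i ^ 2 = if i ∈ Icc 1 r then a i ^ 2 else 0 := by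
    unfold restrictIcc; split_ifs <;> ring
  have hsub : Icc 1 r ⊆ range (r + 1) := fun i hi => by
    simp only [mem_Icc, mem_range] at hi ⊢; omega
  rw [sum_congr rfl fun i _ => hsq i, sum_ite_mem, inter_eq_right.mpr hsub]

theorem sum_range_restrictIcc_succ_sq :
    ∑ i ∈ range (r + 1), restrictIcc r a (i + 1) ^ 2 = ∑ i ∈ Icc 1 r, a i ^ 2 := by
  have h := (sum_range_succ' (fun i => restrictIcc r a i ^ 2) (r + 1)).symm.trans
    (sum_range_succ _ _)
  rw [restrictIcc_zero, restrictIcc_of_lt r a (Nat.lt_succ_self r)] at h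
  simpa [sum_range_restrictIcc_sq] using h

theorem sum_range_restrictIcc_mul_succ :
    ∑ i ∈ range (r + 1), restrictIcc r a i * restrictIcc r a (i + 1) =
      ∑ i ∈ Icc 1 (r - 1), a i * a (i + 1) := by
  have hmul (i : ℕ) : restrictIcc r a i * restrictIcc r a (i + 1) =
      if i ∈ Icc 1 (r - 1) then a i * a (i + 1) else 0 := by
    simp only [restrictIcc, mem_Icc]
    split_ifs <;> first | rfl | omega
  have hsub : Icc 1 (r - 1) ⊆ range (r + 1) := fun i hi => by
    simp only [mem_Icc, mem_range] at hi ⊢; omega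
  rw [sum_congr rfl fun i _ => hmul i, sum_ite_mem, inter_eq_right.mpr hsub]

theorem sum_range_sub_restrictIcc :
    ∑ i ∈ range (r + 1), (restrictIcc r a (i + 1) - restrictIcc r a i) = 0 := by
  rw [sum_range_sub, restrictIcc_zero, restrictIcc_of_lt r a (Nat.lt_succ_self r), sub_zero]

theorem sum_range_sq_sub_restrictIcc :
    ∑ i ∈ range (r + 1), (restrictIcc r a (i + 1) - restrictIcc r a i) ^ 2 =
      2 * quadFormA r a := by
  have hexpand (i : ℕ) : (restrictIcc r a (i + 1) - restrictIcc r a i) ^ 2 =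
      restrictIcc r a (i + 1) ^ 2 + restrictIcc r a i ^ 2 -
        2 * (restrictIcc r a i * restrictIcc r a (i + 1)) := by ring
  rw [sum_congr rfl fun i _ => hexpand i, sum_sub_distrib, sum_add_distrib, ← mul_sum,
    sum_range_restrictIcc_sq, sum_range_restrictIcc_succ_sq, sum_range_restrictIcc_mul_succ,
    quadFormA]
  ring

end restrictIcc

theorem restrictIcc_eq_four_unit_jumps {r : ℕ} {a : ℕ → ℤ} (hq : quadFormA r a = 2) :
    ∃ k₁ k₂ k₃ k₄ : ℕ, ∃ e₁ e₂ e₃ e₄ : ℤ, k₁ < k₂ ∧ k₂ < k₃ ∧ k₃ < k₄ ∧ k₄ ≤ r ∧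
      (e₁ = 1 ∨ e₁ = -1) ∧ (e₂ = 1 ∨ e₂ = -1) ∧ (e₃ = 1 ∨ e₃ = -1) ∧ (e₄ = 1 ∨ e₄ = -1) ∧
      e₁ + e₂ + e₃ + e₄ = 0 ∧
      ∀ i, restrictIcc r a i = (if k₁ < i then e₁ else 0) + (if k₂ < i then e₂ else 0) +
        (if k₃ < i then e₃ else 0) + (if k₄ < i then e₄ else 0) := by
  obtain ⟨k₁, k₂, k₃, k₄, h₁₂, h₂₃, h₃₄, hT, he₁, he₂, he₃, he₄, hsum⟩ :=
    exists_four_unit_jumps (s := range (r + 1))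
      (d := fun i => restrictIcc r a (i + 1) - restrictIcc r a i) (sum_range_sub_restrictIcc r a)
      (by rw [sum_range_sq_sub_restrictIcc, hq]; norm_num)
  have hk₄ : k₄ ≤ r := by
    have : k₄ ∈ {i ∈ range (r + 1) | restrictIcc r a (i + 1) - restrictIcc r a i ≠ 0} := by
      simp only [hT, mem_insert, mem_singleton, or_true]
    simp only [mem_filter, mem_range] at this; omega
  have hjump : ∀ i ∉ ({k₁, k₂, k₃, k₄} : Finset ℕ),
      restrictIcc r a (i + 1) - restrictIcc r a i = 0 := by
    intro i hi
    by_contra hdi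
    by_cases hir : i ≤ r
    · exact hi (hT ▸ mem_filter.mpr ⟨mem_range.mpr (by omega), hdi⟩)
    · rw [restrictIcc_of_lt r a (by omega), restrictIcc_of_lt r a (by omega), sub_self] at hdi
      exact hdi rfl
  refine ⟨k₁, k₂, k₃, k₄, _, _, _, _, h₁₂, h₂₃, h₃₄, hk₄, he₁, he₂, he₃, he₄, hsum,
    fun i => ?_⟩
  rw [eq_sum_filter_lt_of_sub_eq_zero (restrictIcc_zero r a) hjump i, sum_filter,
    sum_insert (by simp [h₁₂.ne, (h₁₂.trans h₂₃).ne, (h₁₂.trans (h₂₃.trans h₃₄)).ne]),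
    sum_insert (by simp [h₂₃.ne, (h₂₃.trans h₃₄).ne]), sum_pair h₃₄.ne]
  ring

theorem stmt_1_general (r : ℕ) (a : ℕ → ℤ)
    (hq : (∑ i ∈ Finset.Icc 1 r, (a i) ^ 2)
        - (∑ i ∈ Finset.Icc 1 (r - 1), a i * a (i + 1)) = 2) :
    ∃ ε : ℤ, (ε = 1 ∨ ε = -1) ∧
      ((∃ i₁ j₁ i₂ j₂ : ℕ, ∃ δ : ℤ, (δ = 1 ∨ δ = -1) ∧
          1 ≤ i₁ ∧ i₁ ≤ j₁ ∧ j₁ + 2 ≤ i₂ ∧ i₂ ≤ j₂ ∧ j₂ ≤ r ∧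
          ∀ i : ℕ, 1 ≤ i → i ≤ r →
            a i = if i₁ ≤ i ∧ i ≤ j₁ then ε
                  else if i₂ ≤ i ∧ i ≤ j₂ then ε * δ else 0) ∨
       (∃ i₁ i₂ j₁ j₂ : ℕ,
          1 ≤ i₁ ∧ i₁ < i₂ ∧ i₂ ≤ j₁ ∧ j₁ < j₂ ∧ j₂ ≤ r ∧
          ∀ i : ℕ, 1 ≤ i → i ≤ r →
            a i = if i₂ ≤ i ∧ i ≤ j₁ then 2 * ε
                  else if (i₁ ≤ i ∧ i < i₂) ∨ (j₁ < i ∧ i ≤ j₂) then ε else 0)) := by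
  obtain ⟨k₁, k₂, k₃, k₄, e₁, e₂, e₃, e₄, h₁₂, h₂₃, h₃₄, hk₄, he₁, he₂, he₃, he₄, hsum, hb⟩ :=
    restrictIcc_eq_four_unit_jumps hq
  have ha : ∀ i, 1 ≤ i → i ≤ r → a i = _ := fun i h₁ h₂ =>
    (restrictIcc_of_mem r a (mem_Icc.mpr ⟨h₁, h₂⟩)).symm.trans (hb i)
  refine ⟨e₁, he₁, ?_⟩
  rcases (by omega : (e₂ = e₁ ∧ e₃ = -e₁ ∧ e₄ = -e₁) ∨ (e₂ = -e₁ ∧ e₄ = -e₃))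
    with ⟨rfl, rfl, rfl⟩ | ⟨rfl, rfl⟩
  · refine .inr ⟨k₁ + 1, k₂ + 1, k₃, k₄, by omega, by omega, by omega, by omega, hk₄,
      fun i h₁ h₂ => ?_⟩
    rw [ha i h₁ h₂]
    split_ifs <;> omega
  · have hδ : e₁ * e₃ = 1 ∨ e₁ * e₃ = -1 := by
      rcases he₁ with rfl | rfl <;> rcases he₃ with rfl | rfl <;> norm_num
    have hεδ : e₁ * (e₁ * e₃) = e₃ := by rcases he₁ with rfl | rfl <;> ring
    refine .inl ⟨k₁ + 1, k₂, k₃ + 1, k₄, e₁ * e₃, hδ, by omega, by omega, by omega, by omega,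
      hk₄, fun i h₁ h₂ => ?_⟩
    rw [ha i h₁ h₂, hεδ]
    split_ifs <;> omega

/-- If `q(a) = 2` for the quadratic form `q` of Dynkin type `A_r`
(with `a` indexed `1, …, r`), then up to a global sign `ε`, either `a` consists of
two interval blocks with entries `ε` resp. `εδ` (`δ = ±1`) separated by at least
one zero, or `a` has the shape `(…,0,ε,…,ε,2ε,…,2ε,ε,…,ε,0,…)` with nonempty
blocks of `ε`'s on both sides of a nonempty block of `2ε`'s. -/
theorem stmt_1 (r : ℕ) (hr : 1 ≤ r) (a : ℕ → ℤ)
    (hq : (∑ i ∈ Finset.Icc 1 r, (a i) ^ 2)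
        - (∑ i ∈ Finset.Icc 1 (r - 1), a i * a (i + 1)) = 2) :
    ∃ ε : ℤ, (ε = 1 ∨ ε = -1) ∧
      ((∃ i₁ j₁ i₂ j₂ : ℕ, ∃ δ : ℤ, (δ = 1 ∨ δ = -1) ∧
          1 ≤ i₁ ∧ i₁ ≤ j₁ ∧ j₁ + 2 ≤ i₂ ∧ i₂ ≤ j₂ ∧ j₂ ≤ r ∧
          ∀ i : ℕ, 1 ≤ i → i ≤ r →
            a i = if i₁ ≤ i ∧ i ≤ j₁ then ε
                  else if i₂ ≤ i ∧ i ≤ j₂ then ε * δ else 0) ∨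
       (∃ i₁ i₂ j₁ j₂ : ℕ,
          1 ≤ i₁ ∧ i₁ < i₂ ∧ i₂ ≤ j₁ ∧ j₁ < j₂ ∧ j₂ ≤ r ∧
          ∀ i : ℕ, 1 ≤ i → i ≤ r →
            a i = if i₂ ≤ i ∧ i ≤ j₁ then 2 * ε
                  else if (i₁ ≤ i ∧ i < i₂) ∨ (j₁ < i ∧ i ≤ j₂) then ε else 0)) :=
  stmt_1_general r a hq
end

section
/- In the group D, the centralizer of y equals the subgroup generated by x^(p^(m−l)) and y; moreover the cyclic subgroups ⟨x^(p^(m−l))⟩ and ⟨y⟩ intersect trivially, and the centralizer of y has order p^(n+l). -/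
/-!
As `D` is finite, conjugation by `y` maps `⟨x⟩` bijectively onto itself, so `⟨x⟩` is normal and
`D = ⟨x⟩⟨y⟩`; then `|⟨x⟩| |⟨y⟩| = |D|` forces `⟨x⟩ ∩ ⟨y⟩ = 1`. An element `x^i` commutes with `y`
iff `x^(p^l i) = 1`, i.e. iff `p^(m-l) ∣ i`, so `C(y) ∩ ⟨x⟩ = ⟨x^(p^(m-l))⟩` has order `p^l`.
Since `⟨y⟩ ≤ C(y)`, the modular law gives `C(y) = (C(y) ∩ ⟨x⟩)⟨y⟩`, and the product formula
`|C(y)⟨x⟩| |C(y) ∩ ⟨x⟩| = |C(y)| |⟨x⟩|` with `C(y)⟨x⟩ = D` gives `|C(y)| = p^(n+l)`.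
-/

open Subgroup

namespace Subgroup

variable {G : Type*} [Group G]

theorem closure_pair_eq_zpowers_sup (x y : G) : closure {x, y} = zpowers x ⊔ zpowers y := by
  rw [Set.insert_eq, closure_union, zpowers_eq_closure, zpowers_eq_closure]

theorem card_eq_card_inf_mul_relIndex (H K : Subgroup G) :
    Nat.card H = Nat.card ↥(K ⊓ H) * K.relIndex H := by
  rw [← relIndex_bot_left, ← relIndex_bot_left, ← inf_relIndex_right K H]
  exact (relIndex_mul_relIndex _ _ _ bot_le inf_le_right).symm

theorem card_sup_mul_card_inf (H K : Subgroup G) [K.Normal] :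
    Nat.card ↥(H ⊔ K) * Nat.card ↥(H ⊓ K) = Nat.card H * Nat.card K := by
  rw [card_eq_card_inf_mul_relIndex (H ⊔ K) K, card_eq_card_inf_mul_relIndex H K,
    inf_of_le_left le_sup_right, relIndex_sup_right, inf_comm]
  ring

theorem inf_eq_bot_of_card_mul_eq_card [Finite G] {H K : Subgroup G} [K.Normal]
    (hsup : H ⊔ K = ⊤) (hcard : Nat.card H * Nat.card K = Nat.card G) : H ⊓ K = ⊥ := by
  have hprod := card_sup_mul_card_inf H K
  rw [hsup, card_top, hcard, ← card_top (G := G), ← hsup] at hprod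
  rw [← card_eq_one]
  exact Nat.eq_of_mul_eq_mul_left Nat.card_pos (hprod.trans (mul_one _).symm)

-- A case of Dedekind's modular law.
theorem eq_inf_sup_of_le {H K L : Subgroup G} [H.Normal] (hsup : H ⊔ K = ⊤) (hKL : K ≤ L) :
    L = L ⊓ H ⊔ K := by
  refine le_antisymm (fun g hg => ?_) (sup_le inf_le_left hKL)
  have hg' : g ∈ ((H ⊔ K : Subgroup G) : Set G) := by simp [hsup]
  rw [normal_mul] at hg'
  obtain ⟨h, hh, k, hk, rfl⟩ := hg'
  have hhL : h ∈ L := by simpa using mul_mem hg (inv_mem (hKL hk))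
  exact mul_mem_sup ⟨hhL, hh⟩ hk

theorem mem_normalizer_zpowers_of_conj_mem [Finite G] {g x : G} (h : g * x * g⁻¹ ∈ zpowers x) :
    g ∈ normalizer (zpowers x : Set G) := by
  rw [mem_normalizer_iff_map_conj_eq, MonoidHom.map_zpowers]
  refine eq_of_le_of_card_ge (zpowers_le.mpr h) ?_
  rw [Nat.card_zpowers, Nat.card_zpowers]
  exact (MulEquiv.orderOf_eq _ x).ge

theorem normal_zpowers_of_closure_pair_eq_top [Finite G] {x y : G} (hgen : closure {x, y} = ⊤)
    (hconj : y * x * y⁻¹ ∈ zpowers x) : (zpowers x).Normal := by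
  rw [← normalizer_eq_top_iff, eq_top_iff, ← hgen, closure_le]
  rintro g (rfl | rfl)
  · exact le_normalizer (mem_zpowers g)
  · exact mem_normalizer_zpowers_of_conj_mem hconj

end Subgroup

section Metacyclic

variable {G : Type*} [Group G] {x y : G} {d : ℕ}

theorem commute_zpow_iff_of_conj_eq (hconj : y * x * y⁻¹ = x ^ (1 + d)) (i : ℤ) :
    Commute y (x ^ i) ↔ (orderOf x : ℤ) ∣ d * i := by
  have hconj_zpow : y * x ^ i * y⁻¹ = x ^ i * x ^ ((d : ℤ) * i) := by
    rw [← conj_zpow, hconj, ← zpow_natCast, ← zpow_mul, ← zpow_add]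
    push_cast
    ring_nf
  rw [commute_iff_eq, orderOf_dvd_iff_zpow_eq_one, ← mul_eq_left (a := x ^ i), ← hconj_zpow,
    mul_inv_eq_iff_eq_mul]

theorem centralizer_inf_zpowers_eq (hconj : y * x * y⁻¹ = x ^ (1 + d)) {e : ℕ}
    (hx : orderOf x = e * d) (hd : d ≠ 0) :
    centralizer {y} ⊓ zpowers x = zpowers (x ^ e) := by
  refine le_antisymm ?_ (zpowers_le.mpr ⟨?_, pow_mem (mem_zpowers x) e⟩)
  · rintro g ⟨hgy, i, rfl⟩
    have hcomm : Commute y (x ^ i) := (mem_centralizer_singleton_iff.mp hgy).symm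
    rw [commute_zpow_iff_of_conj_eq hconj, hx, Nat.cast_mul, mul_comm (e : ℤ)] at hcomm
    obtain ⟨t, rfl⟩ := (Int.dvd_of_mul_dvd_mul_left (by exact_mod_cast hd) hcomm)
    exact ⟨t, by simp only [zpow_mul, zpow_natCast]⟩
  · change x ^ e ∈ centralizer {y}
    rw [mem_centralizer_singleton_iff, ← zpow_natCast, eq_comm]
    refine (commute_zpow_iff_of_conj_eq hconj _).mpr ?_
    rw [hx]
    exact ⟨1, by push_cast; ring⟩

end Metacyclic

theorem stmt_3_general (p m n l : ℕ) (hp : p.Prime) (hlm : l < m)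
    (D : Type*) [Group D] (x y : D)
    (hcard : Nat.card D = p ^ (m + n))
    (hx : orderOf x = p ^ m) (hy : orderOf y = p ^ n)
    (hconj : y * x * y⁻¹ = x ^ (1 + p ^ l))
    (hgen : Subgroup.closure {x, y} = ⊤) :
    Subgroup.centralizer {y} = Subgroup.closure {x ^ p ^ (m - l), y} ∧
    Subgroup.zpowers (x ^ p ^ (m - l)) ⊓ Subgroup.zpowers y = ⊥ ∧
    Nat.card (Subgroup.centralizer {y} : Subgroup D) = p ^ (n + l) := by
  have hp0 : 0 < p := hp.pos
  have : Finite D := Nat.finite_of_card_ne_zero (by rw [hcard]; positivity)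
  have hpm : p ^ m = p ^ (m - l) * p ^ l := by rw [← pow_add, Nat.sub_add_cancel hlm.le]
  have : (zpowers x).Normal :=
    normal_zpowers_of_closure_pair_eq_top hgen (hconj ▸ pow_mem (mem_zpowers x) _)
  have hsup : zpowers x ⊔ zpowers y = ⊤ := by rw [← closure_pair_eq_zpowers_sup, hgen]
  have hinf : zpowers x ⊓ zpowers y = ⊥ := by
    rw [inf_comm]
    refine inf_eq_bot_of_card_mul_eq_card (sup_comm (zpowers x) _ ▸ hsup) ?_
    rw [Nat.card_zpowers, Nat.card_zpowers, hx, hy, hcard, pow_add, mul_comm]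
  have hC : centralizer {y} ⊓ zpowers x = zpowers (x ^ p ^ (m - l)) :=
    centralizer_inf_zpowers_eq hconj (hx.trans hpm) (by positivity)
  have hyC : zpowers y ≤ centralizer {y} := zpowers_le.mpr (mem_centralizer_singleton_iff.mpr rfl)
  refine ⟨?_, ?_, ?_⟩
  · rw [closure_pair_eq_zpowers_sup, ← hC]
    exact eq_inf_sup_of_le hsup hyC
  · exact eq_bot_iff.mpr (hinf ▸ inf_le_inf_right _ (hC ▸ inf_le_right))
  · have hCX : centralizer {y} ⊔ zpowers x = ⊤ :=
      top_unique (hsup ▸ sup_le le_sup_right (hyC.trans le_sup_left))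
    have hord : orderOf (x ^ p ^ (m - l)) = p ^ l := by
      rw [orderOf_pow_of_dvd (by positivity) (hx ▸ hpm ▸ dvd_mul_right _ _), hx, hpm,
        Nat.mul_div_cancel_left _ (by positivity)]
    have hcard_sup := card_sup_mul_card_inf (centralizer {y}) (zpowers x)
    rw [hCX, hC, card_top, hcard, Nat.card_zpowers, Nat.card_zpowers, hx, hord] at hcard_sup
    exact Nat.eq_of_mul_eq_mul_right (by positivity : 0 < p ^ m) (by rw [← hcard_sup]; ring)

/-- In the split metacyclic group
`D = ⟨x, y ∣ x^(p^m) = y^(p^n) = 1, y x y⁻¹ = x^(1+p^l)⟩` (`p` odd, `0 < l < m`,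
`m − l ≤ n`), the centralizer of `y` is `⟨x^(p^(m−l)), y⟩`, the subgroups
`⟨x^(p^(m−l))⟩` and `⟨y⟩` intersect trivially, and `|C_D(y)| = p^(n+l)`. -/
theorem stmt_3 (p m n l : ℕ) (hp : p.Prime) (hodd : Odd p)
    (hl : 0 < l) (hlm : l < m) (hmn : m - l ≤ n)
    (D : Type*) [Group D] (x y : D)
    (hcard : Nat.card D = p ^ (m + n))
    (hx : orderOf x = p ^ m) (hy : orderOf y = p ^ n)
    (hconj : y * x * y⁻¹ = x ^ (1 + p ^ l))
    (hgen : Subgroup.closure {x, y} = ⊤) :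
    Subgroup.centralizer {y} = Subgroup.closure {x ^ p ^ (m - l), y} ∧
    Subgroup.zpowers (x ^ p ^ (m - l)) ⊓ Subgroup.zpowers y = ⊥ ∧
    Nat.card (Subgroup.centralizer {y} : Subgroup D) = p ^ (n + l) :=
  stmt_3_general p m n l hp hlm D x y hcard hx hy hconj hgen
end

section
/- In the group D, the powers of y are pairwise nonconjugate: if 0 ≤ i, j < p^n and y^i is conjugate in D to y^j, then i = j. Consequently the elements of ⟨y⟩ lie in exactly p^n distinct conjugacy classes of D. -/
/-!
The cyclic subgroup `⟨x⟩` is normal (conjugation by `y` maps it into itself, hence onto it by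
finiteness), and `D ⧸ ⟨x⟩` is cyclic, generated by the image of `y`, of order `p ^ n = orderOf y`.
Conjugate elements have equal images in the abelian quotient, and since `⟨y⟩` meets `⟨x⟩`
trivially, distinct powers of `y` have distinct images there.
-/

namespace Subgroup

variable {G : Type*} [Group G]

theorem normal_zpowers_of_conj_mem [Finite G] {x y : G} (hconj : y * x * y⁻¹ ∈ zpowers x)
    (hgen : closure {x, y} = ⊤) : (zpowers x).Normal := by
  have hy : y ∈ normalizer (zpowers x : Set G) := by
    refine mem_normalizer_fintype ?_
    rintro _ ⟨k, rfl⟩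
    simpa only [conj_zpow, SetLike.mem_coe] using zpow_mem hconj k
  rw [← normalizer_eq_top_iff, eq_top_iff, ← hgen, closure_le]
  rintro g (rfl | rfl)
  exacts [le_normalizer (mem_zpowers g), hy]

theorem zpowers_mk_eq_top_of_closure_pair_eq_top {N : Subgroup G} [N.Normal] {x y : G}
    (hx : x ∈ N) (hgen : closure {x, y} = ⊤) : zpowers (y : G ⧸ N) = ⊤ := by
  rw [← map_top_of_surjective _ (QuotientGroup.mk'_surjective N), ← hgen, MonoidHom.map_closure,
    Set.image_pair, QuotientGroup.mk'_apply, (QuotientGroup.eq_one_iff x).mpr hx,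
    closure_insert_one, zpowers_eq_closure, QuotientGroup.mk'_apply]

end Subgroup

theorem isConj_iff_eq_of_zpowers_eq_top {G : Type*} [Group G] {g a b : G}
    (hg : Subgroup.zpowers g = ⊤) : IsConj a b ↔ a = b :=
  haveI : IsCyclic G := isCyclic_iff_exists_zpowers_eq_top.mpr ⟨g, hg⟩
  letI := IsCyclic.commGroup (α := G)
  isConj_iff_eq

theorem injOn_conjClasses_mk_zpowers {G : Type*} [Group G] {N : Subgroup G} [N.Normal] {y : G}
    (htop : Subgroup.zpowers (y : G ⧸ N) = ⊤) (hord : orderOf (y : G ⧸ N) = orderOf y) :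
    Set.InjOn ConjClasses.mk (Subgroup.zpowers y : Set G) := by
  rintro _ ⟨a, rfl⟩ _ ⟨b, rfl⟩ h
  have hconj := (QuotientGroup.mk' N).map_isConj (ConjClasses.mk_eq_mk_iff_isConj.mp h)
  simp only [map_zpow, QuotientGroup.mk'_apply, isConj_iff_eq_of_zpowers_eq_top htop,
    zpow_eq_zpow_iff_modEq, hord] at hconj
  exact zpow_eq_zpow_iff_modEq.mpr hconj

theorem stmt_5_general (p m n l : ℕ) (hp : p.Prime)
    (D : Type*) [Group D] (x y : D)
    (hcard : Nat.card D = p ^ (m + n))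
    (hx : orderOf x = p ^ m) (hy : orderOf y = p ^ n)
    (hconj : y * x * y⁻¹ = x ^ (1 + p ^ l))
    (hgen : Subgroup.closure {x, y} = ⊤) :
    (∀ i j : ℕ, i < p ^ n → j < p ^ n → IsConj (y ^ i) (y ^ j) → i = j) ∧
    Set.ncard (ConjClasses.mk '' ((Subgroup.zpowers y : Subgroup D) : Set D)) = p ^ n := by
  have : Finite D := Nat.finite_of_card_ne_zero (by rw [hcard]; exact (pow_pos hp.pos _).ne')
  have : (Subgroup.zpowers x).Normal :=
    Subgroup.normal_zpowers_of_conj_mem (hconj ▸ pow_mem (Subgroup.mem_zpowers x) _) hgen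
  have htop := Subgroup.zpowers_mk_eq_top_of_closure_pair_eq_top (Subgroup.mem_zpowers x) hgen
  have hord : orderOf (y : D ⧸ Subgroup.zpowers x) = orderOf y := by
    have hsplit := (Subgroup.zpowers x).card_eq_card_quotient_mul_card_subgroup
    rw [hcard, Nat.card_zpowers, hx, pow_add, mul_comm] at hsplit
    rw [orderOf_eq_card_of_zpowers_eq_top htop, hy]
    exact (Nat.eq_of_mul_eq_mul_right (pow_pos hp.pos m) hsplit).symm
  have hinj := injOn_conjClasses_mk_zpowers htop hord
  refine ⟨fun i j hi hj hij => ?_, ?_⟩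
  · refine pow_injOn_Iio_orderOf (by rwa [hy]) (by rwa [hy]) (hinj ?_ ?_ ?_)
    exacts [Subgroup.npow_mem_zpowers y i, Subgroup.npow_mem_zpowers y j,
      ConjClasses.mk_eq_mk_iff_isConj.mpr hij]
  · rw [hinj.ncard_image, ← Nat.card_coe_set_eq, SetLike.coe_sort_coe,
      Nat.card_zpowers, hy]

/-- In the split metacyclic group
`D = ⟨x, y ∣ x^(p^m) = y^(p^n) = 1, y x y⁻¹ = x^(1+p^l)⟩` (`p` odd, `0 < l < m`,
`m − l ≤ n`), the powers of `y` are pairwise nonconjugate; consequently the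
elements of `⟨y⟩` lie in exactly `p^n` distinct conjugacy classes. -/
theorem stmt_5 (p m n l : ℕ) (hp : p.Prime) (hodd : Odd p)
    (hl : 0 < l) (hlm : l < m) (hmn : m - l ≤ n)
    (D : Type*) [Group D] (x y : D)
    (hcard : Nat.card D = p ^ (m + n))
    (hx : orderOf x = p ^ m) (hy : orderOf y = p ^ n)
    (hconj : y * x * y⁻¹ = x ^ (1 + p ^ l))
    (hgen : Subgroup.closure {x, y} = ⊤) :
    (∀ i j : ℕ, i < p ^ n → j < p ^ n → IsConj (y ^ i) (y ^ j) → i = j) ∧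
    Set.ncard (ConjClasses.mk '' ((Subgroup.zpowers y : Subgroup D) : Set D)) = p ^ n :=
  stmt_5_general p m n l hp D x y hcard hx hy hconj hgen
end

section
/- Let α be an automorphism of the group D such that α(y) = y and α(x) = x^s for some integer s with s ≢ 1 (mod p). Then the set of fixed points of α is exactly the cyclic subgroup ⟨y⟩, i.e. for d ∈ D one has α(d) = d if and only if d is a power of y. -/
/-- In the split metacyclic group
`D = ⟨x, y ∣ x^(p^m) = y^(p^n) = 1, y x y⁻¹ = x^(1+p^l)⟩` (`p` odd, `0 < l < m`,
`m − l ≤ n`), an automorphism `α` with `α(y) = y` and `α(x) = x^s` for some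
integer `s ≢ 1 (mod p)` has fixed-point set exactly `⟨y⟩`. -/
theorem stmt_6 (p m n l : ℕ) (hp : p.Prime) (hodd : Odd p)
    (hl : 0 < l) (hlm : l < m) (hmn : m - l ≤ n)
    (D : Type*) [Group D] (x y : D)
    (hcard : Nat.card D = p ^ (m + n))
    (hx : orderOf x = p ^ m) (hy : orderOf y = p ^ n)
    (hconj : y * x * y⁻¹ = x ^ (1 + p ^ l))
    (hgen : Subgroup.closure {x, y} = ⊤)
    (α : D ≃* D) (s : ℤ) (hs : ¬ s ≡ 1 [ZMOD (p : ℤ)])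
    (hαx : α x = x ^ s) (hαy : α y = y) :
    ∀ d : D, α d = d ↔ d ∈ Subgroup.zpowers y := by
  have hxpm : x ^ ((p : ℤ) ^ m) = 1 := by
    rw [← zpow_natCast] at *
    norm_cast
    rw [← hx]; exact pow_orderOf_eq_one x
  -- coprimality of 1 + p^l with p
  have hpl : ¬ ((p : ℤ) ∣ (1 + (p : ℤ) ^ l)) := by
    intro h
    have : (p : ℤ) ∣ (p : ℤ) ^ l := dvd_pow_self _ hl.ne'
    have h1 : (p : ℤ) ∣ 1 := by
      have := dvd_sub h this
      simpa using this
    have := Int.le_of_dvd one_pos h1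
    have h2 : (2 : ℤ) ≤ p := by exact_mod_cast hp.two_le
    omega
  have hprime : Prime (p : ℤ) := Nat.prime_iff_prime_int.mp hp
  -- y⁻¹ * x * y ∈ zpowers x
  have hcop : IsCoprime ((1 : ℤ) + (p : ℤ) ^ l) ((p : ℤ) ^ m) :=
    (IsCoprime.pow_right ((hprime.coprime_iff_not_dvd.mpr hpl).symm))
  obtain ⟨u, v, huv⟩ := hcop
  have hconjz : ∀ k : ℤ, y * x ^ k * y⁻¹ = x ^ (k * (1 + (p : ℤ) ^ l)) := by
    intro k
    have : (y * x * y⁻¹) ^ k = y * x ^ k * y⁻¹ := conj_zpow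
    rw [← this, hconj]
    rw [← zpow_natCast x (1 + p ^ l), ← zpow_mul, mul_comm]
    push_cast
    ring_nf
  have hinv : y⁻¹ * x * y = x ^ u := by
    have : y * x ^ u * y⁻¹ = x ^ (u * (1 + (p:ℤ) ^ l)) := hconjz u
    have h2 : x ^ (v * (p:ℤ) ^ m) = 1 := by
      rw [mul_comm, zpow_mul, hxpm, one_zpow]
    have hx1 : x ^ (u * (1 + (p:ℤ) ^ l)) = x := by
      have h0 : x ^ (u * (1 + (p:ℤ) ^ l) + v * (p:ℤ) ^ m) = x ^ (1 : ℤ) := by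
        rw [huv]
      rwa [zpow_add, zpow_one, h2, mul_one] at h0
    rw [hx1] at this
    calc y⁻¹ * x * y = y⁻¹ * (y * x ^ u * y⁻¹) * y := by rw [this]
    _ = x ^ u := by group
  set N : Subgroup D := Subgroup.zpowers x with hNdef
  have hNnormal : N.Normal := by
    rw [← Subgroup.normalizer_eq_top_iff]
    rw [eq_top_iff, ← hgen, Subgroup.closure_le]
    rintro g (rfl | rfl)
    · exact Subgroup.le_normalizer (Subgroup.mem_zpowers g)
    · rw [SetLike.mem_coe, Subgroup.mem_normalizer_iff]
      intro h
      constructor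
      · rintro ⟨k, rfl⟩
        exact ⟨k * (1 + (p:ℤ) ^ l), (hconjz k).symm⟩
      · intro hmem
        rw [Subgroup.mem_zpowers_iff] at hmem
        obtain ⟨k, hk⟩ := hmem
        have : h = g⁻¹ * x ^ k * g := by
          rw [hk]; group
        rw [this]
        have h2 : g⁻¹ * x ^ k * g = (g⁻¹ * x * g) ^ k := by
          rw [show g⁻¹ * x * g = g⁻¹ * x * (g⁻¹)⁻¹ by group, conj_zpow]; group
        rw [h2, hinv, ← zpow_mul]
        exact ⟨u * k, rfl⟩
  haveI := hNnormal
  -- decomposition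
  have hdecomp : ∀ d : D, ∃ a b : ℤ, d = x ^ a * y ^ b := by
    intro d
    have : d ∈ ((N ⊔ Subgroup.zpowers y : Subgroup D) : Set D) := by
      have : (⊤ : Subgroup D) ≤ N ⊔ Subgroup.zpowers y := by
        rw [← hgen, Subgroup.closure_le]
        rintro g (rfl | rfl)
        · exact Subgroup.mem_sup_left (Subgroup.mem_zpowers g)
        · exact Subgroup.mem_sup_right (Subgroup.mem_zpowers g)
      exact this trivial
    rw [Subgroup.normal_mul] at this
    obtain ⟨n1, hn1, n2, hn2, rfl⟩ := this
    obtain ⟨a, rfl⟩ := hn1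
    obtain ⟨b, rfl⟩ := hn2
    exact ⟨a, b, rfl⟩
  -- not dvd s - 1
  have hsd : ¬ ((p : ℤ) ∣ (s - 1)) := by
    intro h
    exact hs (Int.ModEq.symm ((Int.modEq_iff_dvd).mpr (by simpa using h)))
  have hcop2 : IsCoprime ((p : ℤ) ^ m) (s - 1) :=
    IsCoprime.pow_left (hprime.coprime_iff_not_dvd.mpr hsd)
  intro d
  constructor
  · intro hfix
    obtain ⟨a, b, rfl⟩ := hdecomp d
    rw [map_mul, map_zpow, map_zpow, hαx, hαy, ← zpow_mul] at hfix
    have hxa : x ^ (s * a) = x ^ a := mul_right_cancel hfix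
    have : x ^ (s * a - a) = 1 := by
      rw [zpow_sub, hxa, mul_inv_cancel]
    have hdvd : ((orderOf x : ℤ)) ∣ (s * a - a) := orderOf_dvd_iff_zpow_eq_one.mpr this
    rw [hx] at hdvd
    push_cast at hdvd
    have hdvd2 : ((p:ℤ) ^ m) ∣ (s - 1) * a := by
      convert hdvd using 1; ring
    have : ((p:ℤ) ^ m) ∣ a := hcop2.dvd_of_dvd_mul_left hdvd2
    obtain ⟨c, rfl⟩ := this
    rw [zpow_mul, hxpm, one_zpow, one_mul]
    exact ⟨b, rfl⟩
  · rintro ⟨k, rfl⟩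
    rw [map_zpow, hαy]
end

section
/- The commutator subgroup D′ of the group D equals the cyclic subgroup ⟨x^(p^l)⟩ generated by x^(p^l), and |D′| = p^(m−l). -/
/-!
A direct computation gives `⁅y, x⁆ = x ^ p ^ l`. Conjugation by `x` and by `y` maps the finite
cyclic group `⟨x ^ p ^ l⟩` into itself, hence onto itself; since `x` and `y` generate `D`, the
subgroup is normal. Modulo it the images of `x` and `y` commute, so the quotient is abelian and
`D′ ≤ ⟨⁅y, x⁆⟩ ≤ D′`. The order of `D′` is then the order `p ^ (m - l)` of `x ^ p ^ l`.
-/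

open scoped commutatorElement

namespace Subgroup

variable {G : Type*} [Group G]

theorem mem_normalizer_zpowers_of_conj_eq_pow {a g : G} (ha : IsOfFinOrder a) {k : ℕ}
    (hconj : g * a * g⁻¹ = a ^ k) : g ∈ normalizer (zpowers a : Set G) := by
  have : Finite (zpowers a) := ha.finite_zpowers
  rw [mem_normalizer_iff_map_conj_eq]
  refine eq_of_le_of_card_ge ?_ (card_map_of_injective (MulAut.conj g).injective).ge
  rw [MonoidHom.map_zpowers, zpowers_le, MonoidHom.coe_coe, MulAut.conj_apply, hconj]
  exact pow_mem (mem_zpowers a) k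

theorem commute_of_closure_pair_eq_top {x y : G} (hxy : Commute x y)
    (hgen : closure {x, y} = ⊤) (g h : G) : Commute g h := by
  have : IsMulCommutative (closure {x, y}) := isMulCommutative_closure <| by
    rintro _ (rfl | rfl) _ (rfl | rfl)
    exacts [rfl, hxy.eq, hxy.symm.eq, rfl]
  exact setLike_mul_comm (hgen ▸ mem_top g : g ∈ closure {x, y}) (hgen ▸ mem_top h)

theorem commutator_le_of_closure_pair_eq_top {x y : G} (hgen : closure {x, y} = ⊤)
    {N : Subgroup G} [N.Normal] (hxy : ⁅x, y⁆ ∈ N) : _root_.commutator G ≤ N := by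
  let π := QuotientGroup.mk' N
  have hgenπ : closure {π x, π y} = ⊤ := by
    rw [← Set.image_pair, ← MonoidHom.map_closure, hgen,
      map_top_of_surjective _ (QuotientGroup.mk'_surjective N)]
  have hcomm : Commute (π x) (π y) := by
    rwa [← commutatorElement_eq_one_iff_commute, ← map_commutatorElement,
      QuotientGroup.mk'_apply, QuotientGroup.eq_one_iff]
  rw [_root_.commutator_def, commutator_le]
  intro g _ h _
  rw [← QuotientGroup.eq_one_iff, ← QuotientGroup.mk'_apply, map_commutatorElement,
    commutatorElement_eq_one_iff_commute]
  exact commute_of_closure_pair_eq_top hcomm hgenπ _ _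

theorem commutator_eq_zpowers_of_closure_pair_eq_top {x y : G} (hgen : closure {x, y} = ⊤)
    [(zpowers ⁅x, y⁆).Normal] : _root_.commutator G = zpowers ⁅x, y⁆ :=
  (commutator_le_of_closure_pair_eq_top hgen (mem_zpowers _)).antisymm <| zpowers_le.mpr <|
    _root_.commutator_def G ▸ commutator_mem_commutator (mem_top x) (mem_top y)

end Subgroup

theorem stmt_7_general (p m l : ℕ) (hp : p.Prime) (hlm : l < m)
    (D : Type*) [Group D] (x y : D)
    (hx : orderOf x = p ^ m)
    (hconj : y * x * y⁻¹ = x ^ (1 + p ^ l))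
    (hgen : Subgroup.closure {x, y} = ⊤) :
    commutator D = Subgroup.zpowers (x ^ p ^ l) ∧
    Nat.card (commutator D) = p ^ (m - l) := by
  have hyx : ⁅y, x⁆ = x ^ p ^ l := by
    rw [commutatorElement_def, hconj, add_comm, pow_add, pow_one, mul_inv_cancel_right]
  have hfin : IsOfFinOrder (x ^ p ^ l) :=
    (orderOf_pos_iff.mp (hx ▸ pow_pos hp.pos m)).pow
  have hnormal : (Subgroup.zpowers ⁅y, x⁆).Normal := by
    rw [← Subgroup.normalizer_eq_top_iff, eq_top_iff, ← hgen, Subgroup.closure_le, hyx,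
      Set.insert_subset_iff, Set.singleton_subset_iff]
    constructor
    · refine Subgroup.mem_normalizer_zpowers_of_conj_eq_pow hfin (k := 1) ?_
      rw [pow_one, (Commute.self_pow x _).eq, mul_inv_cancel_right]
    · refine Subgroup.mem_normalizer_zpowers_of_conj_eq_pow hfin (k := 1 + p ^ l) ?_
      rw [← conj_pow, hconj, ← pow_mul, ← pow_mul, mul_comm]
  have hord : orderOf (x ^ p ^ l) = p ^ (m - l) := by
    rw [orderOf_pow' x (pow_ne_zero _ hp.ne_zero), hx,
      Nat.gcd_eq_right (pow_dvd_pow p hlm.le), Nat.pow_div hlm.le hp.pos]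
  rw [Subgroup.commutator_eq_zpowers_of_closure_pair_eq_top (Set.pair_comm x y ▸ hgen), hyx]
  exact ⟨rfl, by rw [Nat.card_zpowers, hord]⟩

/-- In the split metacyclic group
`D = ⟨x, y ∣ x^(p^m) = y^(p^n) = 1, y x y⁻¹ = x^(1+p^l)⟩` (`p` odd, `0 < l < m`,
`m − l ≤ n`), the commutator subgroup is `⟨x^(p^l)⟩`, of order `p^(m−l)`. -/
theorem stmt_7 (p m n l : ℕ) (hp : p.Prime) (hodd : Odd p)
    (hl : 0 < l) (hlm : l < m) (hmn : m - l ≤ n)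
    (D : Type*) [Group D] (x y : D)
    (hcard : Nat.card D = p ^ (m + n))
    (hx : orderOf x = p ^ m) (hy : orderOf y = p ^ n)
    (hconj : y * x * y⁻¹ = x ^ (1 + p ^ l))
    (hgen : Subgroup.closure {x, y} = ⊤) :
    commutator D = Subgroup.zpowers (x ^ p ^ l) ∧
    Nat.card (commutator D) = p ^ (m - l) :=
  stmt_7_general p m l hp hlm D x y hx hconj hgen
end

section
/- The center Z(D) of the group D equals the subgroup generated by x^(p^(m−l)) and y^(p^(m−l)), and |Z(D)| = p^(n−m+2l). (Note that n − m + 2l ≥ 0 since m − l ≤ n and l ≥ 1.) -/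
/-!
Conjugation by `y ^ b` acts on `⟨x⟩` as `x ↦ x ^ (1 + p ^ l) ^ b`. Writing `g = x ^ a * y ^ b`,
`g` commutes with `x` iff `(1 + p ^ l) ^ b ≡ 1 [MOD p ^ m]`, and with `y` iff
`a * p ^ l ≡ 0 [MOD p ^ m]`. Since `p` is odd, `1 + p ^ l` has order `p ^ (m - l)` modulo `p ^ m`,
so both conditions say `p ^ (m - l)` divides the exponent. As `|D| = p ^ m * p ^ n`, the normal
form `x ^ a * y ^ b` is unique up to the orders of `x` and `y`, so the center has
`p ^ l * p ^ (n - (m - l))` elements.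
-/

open Subgroup

theorem ZMod.orderOf_one_add_prime_pow {p : ℕ} (hp : p.Prime) (hp2 : p ≠ 2) {l m : ℕ}
    (hl : 0 < l) (hlm : l ≤ m) :
    orderOf (1 + (p : ZMod (p ^ m)) ^ l) = p ^ (m - l) := by
  obtain ⟨k, rfl⟩ := Nat.exists_eq_add_of_le' hlm
  have hpl : l + 2 ≤ p * l := by
    have : 3 ≤ p := hp.two_le.lt_of_ne' hp2
    nlinarith
  have hp1 : ¬ (p : ℤ) ∣ 1 := by exact_mod_cast hp.not_dvd_one
  simpa using
    ZMod.orderOf_one_add_mul_prime_pow hp l hl.ne' hpl 1 hp1 k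

section Metacyclic

variable {G : Type*} [Group G]

theorem pow_pow_eq_self_iff (x : G) (c b : ℕ) :
    x ^ (c ^ b) = x ↔ orderOf (c : ZMod (orderOf x)) ∣ b := by
  rw [orderOf_dvd_iff_pow_eq_one, ← Nat.cast_pow, ← Nat.cast_one,
    ZMod.natCast_eq_natCast_iff, ← pow_eq_pow_iff_modEq, pow_one]

theorem orderOf_pow_prime_pow {x : G} {p m k : ℕ} (hp : p.Prime) (hx : orderOf x = p ^ m)
    (hkm : k ≤ m) : orderOf (x ^ p ^ k) = p ^ (m - k) := by
  rw [orderOf_pow_of_dvd (pow_ne_zero _ hp.ne_zero) (hx ▸ Nat.pow_dvd_pow p hkm), hx,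
    Nat.pow_div hkm hp.pos]

theorem center_eq_centralizer_of_closure_eq_top {s : Set G} (hs : closure s = ⊤) :
    center G = centralizer s := by
  rw [← centralizer_closure, hs, coe_top, centralizer_univ]

variable {x y : G} {c : ℕ}

theorem SemiconjBy.pow_pow (h : SemiconjBy y x (x ^ c)) (a b : ℕ) :
    SemiconjBy (y ^ b) (x ^ a) (x ^ (a * c ^ b)) := by
  induction b generalizing a with
  | zero => simp
  | succ b ih =>
    have hy : SemiconjBy y (x ^ a) (x ^ (a * c)) := by
      simpa [← pow_mul, mul_comm] using h.pow_right a
    rw [pow_succ, pow_succ, ← mul_assoc, mul_right_comm]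
    exact (ih (a * c)).mul_left hy

/-- The products `x ^ a * y ^ b` form a submonoid, and in a finite group the submonoid generated
by `{x, y}` is already the subgroup it generates. -/
theorem exists_eq_pow_mul_pow [Finite G] (h : SemiconjBy y x (x ^ c))
    (hgen : closure {x, y} = ⊤) (g : G) : ∃ a b : ℕ, g = x ^ a * y ^ b := by
  let S : Submonoid G :=
    { carrier := {g | ∃ a b : ℕ, g = x ^ a * y ^ b}
      one_mem' := ⟨0, 0, by simp⟩
      mul_mem' := by
        rintro _ _ ⟨a, b, rfl⟩ ⟨a', b', rfl⟩
        refine ⟨a + a' * c ^ b, b + b', ?_⟩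
        rw [mul_assoc, ← mul_assoc (y ^ b), (h.pow_pow a' b).eq, pow_add, pow_add]
        group }
  have hS : Submonoid.closure {x, y} ≤ S := by
    rw [Submonoid.closure_le, Set.insert_subset_iff, Set.singleton_subset_iff]
    exact ⟨⟨1, 0, by simp⟩, ⟨0, 1, by simp⟩⟩
  rw [← closure_toSubmonoid_of_finite, hgen] at hS
  exact hS (mem_top g)

theorem pow_mul_pow_mem_center_iff (h : SemiconjBy y x (x ^ c)) (hgen : closure {x, y} = ⊤)
    (a b : ℕ) : x ^ a * y ^ b ∈ center G ↔ x ^ (c ^ b) = x ∧ x ^ (a * c) = x ^ a := by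
  rw [center_eq_centralizer_of_closure_eq_top hgen, mem_centralizer_iff]
  simp only [Set.forall_mem_insert, Set.mem_singleton_iff, forall_eq]
  have hx : x * (x ^ a * y ^ b) = x ^ a * y ^ b * x ↔ x ^ (c ^ b) = x := by
    have hyb : y ^ b * x = x ^ (c ^ b) * y ^ b := by simpa using (h.pow_pow 1 b).eq
    rw [mul_assoc, hyb, ← mul_assoc, ← pow_succ', pow_succ, mul_assoc, mul_right_inj,
      mul_left_inj, eq_comm]
  have hy : y * (x ^ a * y ^ b) = x ^ a * y ^ b * y ↔ x ^ (a * c) = x ^ a := by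
    rw [← mul_assoc, (h.pow_right a).eq, ← pow_mul, mul_comm c, mul_assoc, mul_assoc,
      ← pow_succ', ← pow_succ, mul_left_inj]
  rw [hx, hy]

theorem eq_and_eq_of_mul_eq_mul_of_mem_zpowers [Finite G] (h : SemiconjBy y x (x ^ c))
    (hgen : closure {x, y} = ⊤) (hcard : Nat.card G = orderOf x * orderOf y)
    {u u' v v' : G} (hu : u ∈ zpowers x) (hu' : u' ∈ zpowers x) (hv : v ∈ zpowers y)
    (hv' : v' ∈ zpowers y) (huv : u * v = u' * v') : u = u' ∧ v = v' := by
  let f : zpowers x × zpowers y → G := fun uv => uv.1 * uv.2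
  have hf : Function.Bijective f := by
    refine (Nat.bijective_iff_surjective_and_card f).mpr ⟨fun g => ?_, ?_⟩
    · obtain ⟨a, b, rfl⟩ := exists_eq_pow_mul_pow h hgen g
      exact ⟨(⟨x ^ a, npow_mem_zpowers x a⟩, ⟨y ^ b, npow_mem_zpowers y b⟩), rfl⟩
    · rw [Nat.card_prod, Nat.card_zpowers, Nat.card_zpowers, hcard]
  simpa using hf.injective (a₁ := (⟨u, hu⟩, ⟨v, hv⟩)) (a₂ := (⟨u', hu'⟩, ⟨v', hv'⟩)) huv

theorem eq_closure_of_pow_mul_pow_mem_iff [Finite G] (h : SemiconjBy y x (x ^ c))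
    (hgen : closure {x, y} = ⊤) {H : Subgroup G} {q r : ℕ}
    (hH : ∀ a b : ℕ, x ^ a * y ^ b ∈ H ↔ q ∣ a ∧ r ∣ b) :
    H = closure {x ^ q, y ^ r} := by
  apply le_antisymm
  · intro g hg
    obtain ⟨a, b, rfl⟩ := exists_eq_pow_mul_pow h hgen g
    obtain ⟨⟨a, rfl⟩, ⟨b, rfl⟩⟩ := (hH a b).mp hg
    rw [pow_mul, pow_mul]
    exact mul_mem (pow_mem (subset_closure (by simp)) a) (pow_mem (subset_closure (by simp)) b)
  · rw [closure_le, Set.insert_subset_iff, Set.singleton_subset_iff]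
    exact ⟨by simpa using (hH q 0).mpr ⟨dvd_rfl, dvd_zero r⟩,
      by simpa using (hH 0 r).mpr ⟨dvd_zero q, dvd_rfl⟩⟩

theorem card_eq_of_pow_mul_pow_mem_iff [Finite G] (h : SemiconjBy y x (x ^ c))
    (hgen : closure {x, y} = ⊤) (hcard : Nat.card G = orderOf x * orderOf y)
    {H : Subgroup G} {q r : ℕ} (hH : ∀ a b : ℕ, x ^ a * y ^ b ∈ H ↔ q ∣ a ∧ r ∣ b) :
    Nat.card H = orderOf (x ^ q) * orderOf (y ^ r) := by
  have hxH : zpowers (x ^ q) ≤ H :=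
    zpowers_le.mpr (by simpa using (hH q 0).mpr ⟨dvd_rfl, dvd_zero r⟩)
  have hyH : zpowers (y ^ r) ≤ H :=
    zpowers_le.mpr (by simpa using (hH 0 r).mpr ⟨dvd_zero q, dvd_rfl⟩)
  have hxx : zpowers (x ^ q) ≤ zpowers x := zpowers_le.mpr (npow_mem_zpowers x q)
  have hyy : zpowers (y ^ r) ≤ zpowers y := zpowers_le.mpr (npow_mem_zpowers y r)
  let f : zpowers (x ^ q) × zpowers (y ^ r) → H :=
    fun uv => ⟨uv.1 * uv.2, mul_mem (hxH uv.1.2) (hyH uv.2.2)⟩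
  have hf : Function.Bijective f := by
    constructor
    · rintro ⟨⟨u, hu⟩, ⟨v, hv⟩⟩ ⟨⟨u', hu'⟩, ⟨v', hv'⟩⟩ huv
      obtain ⟨rfl, rfl⟩ := eq_and_eq_of_mul_eq_mul_of_mem_zpowers h hgen hcard
        (hxx hu) (hxx hu') (hyy hv) (hyy hv') (congrArg Subtype.val huv)
      rfl
    · rintro ⟨g, hg⟩
      obtain ⟨a, b, rfl⟩ := exists_eq_pow_mul_pow h hgen g
      obtain ⟨⟨a, rfl⟩, ⟨b, rfl⟩⟩ := (hH a b).mp hg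
      exact ⟨(⟨_, npow_mem_zpowers _ a⟩, ⟨_, npow_mem_zpowers _ b⟩), by simp [f, pow_mul]⟩
  rw [← Nat.card_zpowers, ← Nat.card_zpowers, ← Nat.card_prod]
  exact (Nat.card_congr (Equiv.ofBijective f hf)).symm

end Metacyclic

theorem pow_mul_pow_mem_center_iff_dvd {G : Type*} [Group G] {x y : G} {p m l : ℕ}
    (hp : p.Prime) (hp2 : p ≠ 2) (hl : 0 < l) (hlm : l ≤ m)
    (hx : orderOf x = p ^ m) (h : SemiconjBy y x (x ^ (1 + p ^ l))) (hgen : closure {x, y} = ⊤)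
    (a b : ℕ) : x ^ a * y ^ b ∈ center G ↔ p ^ (m - l) ∣ a ∧ p ^ (m - l) ∣ b := by
  have hpm : p ^ m = p ^ (m - l) * p ^ l := by rw [← pow_add, Nat.sub_add_cancel hlm]
  have hxa : x ^ (a * (1 + p ^ l)) = x ^ a ↔ p ^ (m - l) ∣ a := by
    rw [mul_add, mul_one, pow_add, mul_eq_left, ← orderOf_dvd_iff_pow_eq_one, hx, hpm,
      Nat.mul_dvd_mul_iff_right (pow_pos hp.pos l)]
  rw [pow_mul_pow_mem_center_iff h hgen, pow_pow_eq_self_iff, hx, hxa, Nat.cast_add,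
    Nat.cast_one, Nat.cast_pow, ZMod.orderOf_one_add_prime_pow hp hp2 hl hlm, and_comm]

/-- In the split metacyclic group
`D = ⟨x, y ∣ x^(p^m) = y^(p^n) = 1, y x y⁻¹ = x^(1+p^l)⟩` (`p` odd, `0 < l < m`,
`m − l ≤ n`), the center is `⟨x^(p^(m−l)), y^(p^(m−l))⟩`, of order `p^(n−m+2l)`.
(The exponent is written as `n + 2l − m`, which is a genuine natural number
since `m − l ≤ n` and `l ≥ 1`.) -/
theorem stmt_8 (p m n l : ℕ) (hp : p.Prime) (hodd : Odd p)
    (hl : 0 < l) (hlm : l < m) (hmn : m - l ≤ n)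
    (D : Type*) [Group D] (x y : D)
    (hcard : Nat.card D = p ^ (m + n))
    (hx : orderOf x = p ^ m) (hy : orderOf y = p ^ n)
    (hconj : y * x * y⁻¹ = x ^ (1 + p ^ l))
    (hgen : Subgroup.closure {x, y} = ⊤) :
    Subgroup.center D = Subgroup.closure {x ^ p ^ (m - l), y ^ p ^ (m - l)} ∧
    Nat.card (Subgroup.center D) = p ^ (n + 2 * l - m) := by
  have : Finite D := Nat.finite_of_card_ne_zero (by rw [hcard]; exact pow_ne_zero _ hp.ne_zero)
  have hp2 : p ≠ 2 := by rintro rfl; exact Nat.not_odd_iff_even.mpr even_two hodd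
  have h : SemiconjBy y x (x ^ (1 + p ^ l)) := mul_inv_eq_iff_eq_mul.mp hconj
  have hcenter := pow_mul_pow_mem_center_iff_dvd hp hp2 hl hlm.le hx h hgen
  refine ⟨eq_closure_of_pow_mul_pow_mem_iff h hgen hcenter, ?_⟩
  rw [card_eq_of_pow_mul_pow_mem_iff h hgen (by rw [hcard, hx, hy, pow_add]) hcenter,
    orderOf_pow_prime_pow hp hx (Nat.sub_le m l), orderOf_pow_prime_pow hp hy hmn, ← pow_add]
  congr 1
  omega
end

section
/- Let N and k be positive integers such that N is a sum of exactly k positive squares, i.e. N = a_1² + a_2² + ⋯ + a_k² for some positive integers a_1, …, a_k. Then N − k is not one of the numbers 1, 2, 4, 5, 7, 10, 13. -/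
/-- The additive submonoid of numbers of the form `3s + 8t`. -/
def sqR : AddSubmonoid ℕ where
  carrier := {n | ∃ s t, n = 3 * s + 8 * t}
  zero_mem' := ⟨0, 0, rfl⟩
  add_mem' := by
    rintro x y ⟨s, t, rfl⟩ ⟨s', t', rfl⟩
    exact ⟨s + s', t + t', by ring⟩

lemma sq_sub_one_mem (a : ℕ) (ha : 0 < a) : a ^ 2 - 1 ∈ sqR := by
  rcases Nat.lt_or_ge a 4 with h4 | h4
  · interval_cases a
    · exact ⟨0, 0, rfl⟩
    · exact ⟨1, 0, rfl⟩
    · exact ⟨0, 1, rfl⟩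
  · have h16 : 16 ≤ a ^ 2 := by
      calc 16 = 4 ^ 2 := by norm_num
        _ ≤ a ^ 2 := Nat.pow_le_pow_left h4 2
    have h14 : 14 ≤ a ^ 2 - 1 := by omega
    set n := a ^ 2 - 1 with hn
    have h3 : n % 3 = 0 ∨ n % 3 = 1 ∨ n % 3 = 2 := by omega
    rcases h3 with h | h | h
    · exact ⟨n / 3, 0, by omega⟩
    · exact ⟨(n - 16) / 3, 2, by omega⟩
    · exact ⟨(n - 8) / 3, 1, by omega⟩

/-- If a positive integer `N` is a sum of exactly `k` positive
squares, then `N − k ∉ {1, 2, 4, 5, 7, 10, 13}`. -/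
theorem stmt_10 (N k : ℕ) (hN : 0 < N) (hk : 0 < k)
    (h : ∃ a : Fin k → ℕ, (∀ i, 0 < a i) ∧ N = ∑ i, (a i) ^ 2) :
    N - k ∉ ({1, 2, 4, 5, 7, 10, 13} : Set ℕ) := by
  obtain ⟨a, hpos, hsum⟩ := h
  have hsplit : N = (∑ i, ((a i) ^ 2 - 1)) + k := by
    rw [hsum]
    have : ∀ i : Fin k, (a i) ^ 2 = ((a i) ^ 2 - 1) + 1 := by
      intro i
      have : 1 ≤ (a i) ^ 2 := Nat.one_le_pow _ _ (hpos i)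
      omega
    calc ∑ i, (a i) ^ 2 = ∑ i : Fin k, (((a i) ^ 2 - 1) + 1) := by
          exact Finset.sum_congr rfl fun i _ => this i
      _ = (∑ i, ((a i) ^ 2 - 1)) + k := by
          rw [Finset.sum_add_distrib]
          simp
  have hmem : (∑ i, ((a i) ^ 2 - 1)) ∈ sqR :=
    AddSubmonoid.sum_mem _ fun i _ => sq_sub_one_mem (a i) (hpos i)
  obtain ⟨s, t, hst⟩ := hmem
  intro hm
  simp only [Set.mem_insert_iff, Set.mem_singleton_iff] at hm
  omega
end
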